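/- Let R be a commutative ring and g ≥ 0. There is an R-linear bijection of R^{2g+1} carrying the form λ_{2g+1} of X^{#2g+1} to the alternating form that restricts to the standard symplectic form λ_{H^{⊕g}} on the first 2g coordinates and pairs the last coordinate trivially with everything, and carrying the boundary map ∂_{2g+1} to the projection onto the last coordinate. In other words, X^{#2g+1} is isomorphic as a formed space with boundary to (R^{2g} ⊕ R, λ_{H^{⊕g}} ⊕ 0, pr_R). -/

import Mathlib

/-!
Write `s_j = x_0 + ⋯ + x_j` and `t_j = y_0 + ⋯ + y_j` for the partial sums. Then
`λ_{2g+1}(x, y) = ∑_{j < 2g} (s_j t_{j+1} - s_{j+1} t_j)` and `∂_{2g+1} x = s_{2g}`. Grouping the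
terms of this chain around the odd indices gives
`∑_{k < g} ((s_{2k} - s_{2k+2}) t_{2k+1} - s_{2k+1} (t_{2k} - t_{2k+2}))`,
so `(s_{2k} - s_{2k+2}, s_{2k+1})_{k < g}` are symplectic coordinates, and the form does not
involve the remaining coordinate `s_{2g}`. The change of coordinates `x ↦ (s_{2k} - s_{2k+2}, s_{2k+1}, s_{2g})` is the product of
two unitriangular matrices, hence invertible over any commutative ring.
-/

/-- The bilinear form of the formed space with boundary `X^{#n}`. -/
def lamX (R : Type) [CommRing R] (n : ℕ) (x y : Fin n → R) : R :=
  ∑ i : Fin n, ∑ j : Fin n, (if (i : ℕ) < (j : ℕ) then x i * y j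
    else if (j : ℕ) < (i : ℕ) then -(x i * y j) else 0)

/-- The boundary map of `X^{#n}`. -/
def bdX (R : Type) [CommRing R] (n : ℕ) (x : Fin n → R) : R := ∑ i, x i

/-- The standard symplectic form on `R^n` (interleaved hyperbolic pairs), i.e. the form of the
hyperbolic formed space `H^{⊕ g}` when `n = 2g`. -/
def omegaH (R : Type) [CommRing R] (n : ℕ) (x y : Fin n → R) : R :=
  ∑ i : Fin n, ∑ j : Fin n, (if (i : ℕ) % 2 = 0 ∧ (j : ℕ) = (i : ℕ) + 1 then x i * y j
    else if (j : ℕ) % 2 = 0 ∧ (i : ℕ) = (j : ℕ) + 1 then -(x i * y j) else 0)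

open Finset Matrix

theorem Finset.sum_range_two_mul {M : Type*} [AddCommMonoid M] (f : ℕ → M) (n : ℕ) :
    ∑ i ∈ range (2 * n), f i = ∑ k ∈ range n, (f (2 * k) + f (2 * k + 1)) := by
  induction n with
  | zero => simp
  | succ n ih => rw [Nat.mul_succ, sum_range_succ, sum_range_succ, ih, sum_range_succ]; abel

theorem Finset.sum_sum_range_two_mul_of_blockDiagonal {M : Type*} [AddCommMonoid M]
    (T : ℕ → ℕ → M) (hT : ∀ i j, i / 2 ≠ j / 2 → T i j = 0) (n : ℕ) :
    ∑ i ∈ range (2 * n), ∑ j ∈ range (2 * n), T i j =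
      ∑ k ∈ range n, (T (2 * k) (2 * k) + T (2 * k) (2 * k + 1) +
        (T (2 * k + 1) (2 * k) + T (2 * k + 1) (2 * k + 1))) := by
  simp_rw [sum_range_two_mul, ← sum_add_distrib]
  refine sum_congr rfl fun k hk => ?_
  rw [sum_eq_single_of_mem k hk fun l _ hlk => ?_]
  rw [hT, hT, hT, hT, add_zero, add_zero] <;> omega

theorem Fin.sum_sum_univ_eq_sum_sum_range {M : Type*} [AddCommMonoid M] (T : ℕ → ℕ → M)
    (n : ℕ) : ∑ i : Fin n, ∑ j : Fin n, T i j = ∑ i ∈ range n, ∑ j ∈ range n, T i j := by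
  rw [← Fin.sum_univ_eq_sum_range]
  exact sum_congr rfl fun i _ => Fin.sum_univ_eq_sum_range (T i) n

theorem Fin.exists_natFun_eq {M : Type*} [Zero M] {n : ℕ} (x : Fin n → M) :
    ∃ a : ℕ → M, (fun i : Fin n => a i) = x :=
  ⟨Function.extend Fin.val x 0, funext fun i => Fin.val_injective.extend_apply x 0 i⟩

section

variable {R : Type} [CommRing R]

def prefixSum (a : ℕ → R) (j : ℕ) : R := ∑ i ∈ range (j + 1), a i

theorem sum_range_two_mul_det_succ (u v : ℕ → R) (n : ℕ) :
    ∑ j ∈ range (2 * n), (u j * v (j + 1) - u (j + 1) * v j) =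
      ∑ k ∈ range n, ((u (2 * k) - u (2 * k + 2)) * v (2 * k + 1) -
        u (2 * k + 1) * (v (2 * k) - v (2 * k + 2))) := by
  rw [sum_range_two_mul]
  exact sum_congr rfl fun k _ => by ring

theorem sum_sum_range_antisymm_eq (a b : ℕ → R) (n : ℕ) :
    ∑ i ∈ range n, ∑ j ∈ range n,
        (if i < j then a i * b j else if j < i then -(a i * b j) else 0) =
      ∑ j ∈ range n, ((∑ i ∈ range j, a i) * b j - a j * ∑ i ∈ range j, b i) := by
  induction n with
  | zero => simp
  | succ n ih =>
    have hlt : ∀ i ∈ range n, i < n := fun i hi => mem_range.1 hi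
    simp only [sum_range_succ, sum_add_distrib, ih, lt_irrefl, if_false]
    rw [sum_congr rfl fun i hi => if_pos (hlt i hi),
      sum_congr rfl fun j hj => if_neg (hlt j hj).not_gt,
      sum_congr rfl fun j hj => if_pos (hlt j hj), sum_mul, mul_sum, sum_neg_distrib]
    ring

theorem lamX_succ_natFun (n : ℕ) (a b : ℕ → R) :
    lamX R (n + 1) (fun i => a i) (fun i => b i) =
      ∑ j ∈ range n,
        (prefixSum a j * prefixSum b (j + 1) - prefixSum a (j + 1) * prefixSum b j) := by
  unfold lamX
  beta_reduce
  rw [Fin.sum_sum_univ_eq_sum_sum_range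
    (fun i j => if i < j then a i * b j else if j < i then -(a i * b j) else 0),
    sum_sum_range_antisymm_eq, sum_range_succ']
  simp only [prefixSum, sum_range_succ _ (_ + 1), sum_range_zero, zero_mul, mul_zero, sub_zero,
    add_zero]
  exact sum_congr rfl fun j _ => by ring

theorem omegaH_natFun (g : ℕ) (a b : ℕ → R) :
    omegaH R (2 * g) (fun i => a i) (fun i => b i) =
      ∑ k ∈ range g, (a (2 * k) * b (2 * k + 1) - a (2 * k + 1) * b (2 * k)) := by
  unfold omegaH
  beta_reduce
  rw [Fin.sum_sum_univ_eq_sum_sum_range (fun i j => if i % 2 = 0 ∧ j = i + 1 then a i * b j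
    else if j % 2 = 0 ∧ i = j + 1 then -(a i * b j) else 0),
    sum_sum_range_two_mul_of_blockDiagonal]
  · refine sum_congr rfl fun k _ => ?_
    split_ifs <;> first | omega | ring
  · intro i j hij
    rw [if_neg (by omega), if_neg (by omega)]

variable (R) in
def partialSumMatrix (n : ℕ) : Matrix (Fin n) (Fin n) R :=
  of fun i j => if j ≤ i then 1 else 0

variable (R) in
def evenShiftMatrix (n : ℕ) : Matrix (Fin n) (Fin n) R :=
  of fun i j => if (i : ℕ) % 2 = 0 ∧ (j : ℕ) = i + 2 then 1 else 0

theorem det_partialSumMatrix (n : ℕ) : (partialSumMatrix R n).det = 1 := by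
  rw [det_of_isLowerTriangular (partialSumMatrix R n) fun i j (hij : i < j) =>
    if_neg (not_le.2 hij)]
  simp [partialSumMatrix]

theorem det_one_sub_evenShiftMatrix (n : ℕ) : (1 - evenShiftMatrix R n).det = 1 := by
  rw [det_of_isUpperTriangular fun i j (hij : j < i) => ?_]
  · simp [evenShiftMatrix]
  · have : (j : ℕ) ≠ i + 2 := by omega
    simp [evenShiftMatrix, one_apply_ne hij.ne', this]

theorem partialSumMatrix_mulVec (n : ℕ) (a : ℕ → R) (i : Fin n) :
    (partialSumMatrix R n *ᵥ fun j => a j) i = prefixSum a i := by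
  simp only [partialSumMatrix, mulVec, dotProduct, of_apply, ite_mul, one_mul, zero_mul,
    Fin.le_def]
  rw [Fin.sum_univ_eq_sum_range (fun j => if j ≤ i then a j else 0), ← sum_filter]
  congr 1
  ext j
  simp only [mem_filter, mem_range]
  omega

theorem evenShiftMatrix_mulVec (n : ℕ) (u : ℕ → R) (i : Fin n) :
    (evenShiftMatrix R n *ᵥ fun j => u j) i =
      if (i : ℕ) % 2 = 0 ∧ (i : ℕ) + 2 < n then u (i + 2) else 0 := by
  simp only [evenShiftMatrix, mulVec, dotProduct, of_apply, ite_mul, one_mul, zero_mul]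
  rw [Fin.sum_univ_eq_sum_range (fun j => if (i : ℕ) % 2 = 0 ∧ j = i + 2 then u j else 0)]
  by_cases hi : (i : ℕ) % 2 = 0 <;> simp [hi]

theorem one_sub_evenShiftMatrix_mul_partialSumMatrix_mulVec (n : ℕ) (a : ℕ → R) (i : Fin n) :
    (((1 - evenShiftMatrix R n) * partialSumMatrix R n) *ᵥ fun j : Fin n => a j) i =
      prefixSum a i - if (i : ℕ) % 2 = 0 ∧ (i : ℕ) + 2 < n then prefixSum a (i + 2) else 0 := by
  rw [← mulVec_mulVec, sub_mulVec, one_mulVec, Pi.sub_apply,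
    show partialSumMatrix R n *ᵥ (fun j : Fin n => a j) = fun j : Fin n => prefixSum a j from
      funext (partialSumMatrix_mulVec n a), evenShiftMatrix_mulVec]

variable (R) in
@[simps apply]
def initLastEquiv (n : ℕ) : (Fin (n + 1) → R) ≃ₗ[R] (Fin n → R) × R where
  toFun x := (Fin.init x, x (Fin.last n))
  invFun p := Fin.snoc p.1 p.2
  map_add' _ _ := rfl
  map_smul' _ _ := rfl
  left_inv := Fin.snoc_init_self
  right_inv p := by simp

def xOddCoord (a : ℕ → R) (m : ℕ) : R :=
  if m % 2 = 0 then prefixSum a m - prefixSum a (m + 2) else prefixSum a m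

theorem xOddCoord_two_mul (a : ℕ → R) (k : ℕ) :
    xOddCoord a (2 * k) = prefixSum a (2 * k) - prefixSum a (2 * k + 2) :=
  if_pos (Nat.mul_mod_right 2 k)

theorem xOddCoord_two_mul_add_one (a : ℕ → R) (k : ℕ) :
    xOddCoord a (2 * k + 1) = prefixSum a (2 * k + 1) :=
  if_neg (by omega)

variable (R) in
noncomputable def xOddEquiv (g : ℕ) : (Fin (2 * g + 1) → R) ≃ₗ[R] (Fin (2 * g) → R) × R :=
  (toLinearEquiv (Pi.basisFun R _) ((1 - evenShiftMatrix R _) * partialSumMatrix R _) (by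
    rw [det_mul, det_one_sub_evenShiftMatrix, det_partialSumMatrix, mul_one]
    exact isUnit_one)).trans (initLastEquiv R (2 * g))

theorem xOddEquiv_natFun (g : ℕ) (a : ℕ → R) :
    xOddEquiv R g (fun i => a i) =
      (fun i : Fin (2 * g) => xOddCoord a i, prefixSum a (2 * g)) := by
  simp only [xOddEquiv, LinearEquiv.trans_apply, toLinearEquiv_apply, toLin_eq_toLin',
    toLin'_apply]
  refine Prod.ext (funext fun i => ?_) ?_
  · simp only [initLastEquiv_apply, Fin.init]
    rw [one_sub_evenShiftMatrix_mul_partialSumMatrix_mulVec, xOddCoord, Fin.val_castSucc]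
    split_ifs <;> first | omega | simp
  · simp only [initLastEquiv_apply]
    rw [one_sub_evenShiftMatrix_mul_partialSumMatrix_mulVec, if_neg (by simp), sub_zero,
      Fin.val_last]

end

theorem Xodd_iso
    (R : Type) [CommRing R] (g : ℕ) :
    ∃ e : (Fin (2 * g + 1) → R) ≃ₗ[R] ((Fin (2 * g) → R) × R),
      (∀ x y, omegaH R (2 * g) (e x).1 (e y).1 = lamX R (2 * g + 1) x y) ∧
      (∀ x, (e x).2 = bdX R (2 * g + 1) x) := by
  refine ⟨xOddEquiv R g, fun x y => ?_, fun x => ?_⟩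
  · obtain ⟨a, rfl⟩ := Fin.exists_natFun_eq x
    obtain ⟨b, rfl⟩ := Fin.exists_natFun_eq y
    rw [xOddEquiv_natFun, xOddEquiv_natFun, omegaH_natFun, lamX_succ_natFun,
      sum_range_two_mul_det_succ]
    simp only [xOddCoord_two_mul, xOddCoord_two_mul_add_one]
  · obtain ⟨a, rfl⟩ := Fin.exists_natFun_eq x
    rw [xOddEquiv_natFun]
    exact (Fin.sum_univ_eq_sum_range a _).symm
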